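/- For a semicopula S, the inequality I_S(μ, (f+a)·1_A) ≤ I_S(μ, f·1_A) + min(a, μ(A)) holds for all a ∈ [0,1], measurable A, capacities μ, and measurable f with f + a ∈ [0,1], if and only if S(x+y, z) ≤ S(x, z) + min(y, z) for all x, y, z ∈ [0,1] with x + y ≤ 1. -/

import Mathlib

open Set

def Semicopula (S : ℝ → ℝ → ℝ) : Prop :=
  (∀ x ∈ Icc (0:ℝ) 1, ∀ y ∈ Icc (0:ℝ) 1, S x y ∈ Icc (0:ℝ) 1) ∧
  (∀ x ∈ Icc (0:ℝ) 1, ∀ y ∈ Icc (0:ℝ) 1, ∀ y' ∈ Icc (0:ℝ) 1, y ≤ y' → S x y ≤ S x y') ∧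
  (∀ y ∈ Icc (0:ℝ) 1, ∀ x ∈ Icc (0:ℝ) 1, ∀ x' ∈ Icc (0:ℝ) 1, x ≤ x' → S x y ≤ S x' y) ∧
  (∀ x ∈ Icc (0:ℝ) 1, S x 1 = x ∧ S 1 x = x)

def Capacity {X : Type} (μ : Set X → ℝ) : Prop :=
  (∀ A : Set X, μ A ∈ Icc (0:ℝ) 1) ∧ (∀ A B : Set X, A ⊆ B → μ A ≤ μ B) ∧
  μ (∅ : Set X) = 0 ∧ μ (univ : Set X) = 1

noncomputable def genInt {X : Type} (S : ℝ → ℝ → ℝ) (μ : Set X → ℝ) (f : X → ℝ) : ℝ :=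
  ⨆ t : Icc (0:ℝ) 1, S (t:ℝ) (μ {x | (t:ℝ) ≤ f x})

def Comonotone {X : Type} (f g : X → ℝ) : Prop :=
  ∀ x y, 0 ≤ (f x - f y) * (g x - g y)

def Tcoseminorm (op : ℝ → ℝ → ℝ) : Prop :=
  ∃ S : ℝ → ℝ → ℝ, Semicopula S ∧
    ∀ x ∈ Icc (0:ℝ) 1, ∀ y ∈ Icc (0:ℝ) 1, op x y = 1 - S (1 - x) (1 - y)

/-!
Both sides are tested on level sets. For `0 < t` the level set `{t ≤ ((f + a)·1_A)}` is
`A ∩ {t - a ≤ f}`, so the shift condition applied at `x = t - a`, `y = a` bounds each term of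
the supremum for `(f + a)·1_A` by a term for `f·1_A` plus `min a (μ A)`; levels `t ≤ a` are
handled by `S t z ≤ min t z`. Conversely, `I_S(μ, c·1_A) = S(c, μ A)`, so taking `f` constant
and a capacity with `μ A = z` turns the integral inequality into the shift condition.
-/

variable {S : ℝ → ℝ → ℝ} {X : Type} {μ : Set X → ℝ}

namespace Semicopula

theorem apply_le_min (hS : Semicopula S) {x y : ℝ} (hx : x ∈ Icc (0:ℝ) 1)
    (hy : y ∈ Icc (0:ℝ) 1) : S x y ≤ min x y := by
  refine le_min ?_ ?_
  · simpa only [(hS.2.2.2 x hx).1] using hS.2.1 x hx y hy 1 ⟨zero_le_one, le_rfl⟩ hy.2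
  · simpa only [(hS.2.2.2 y hy).2] using hS.2.2.1 y hy x hx 1 ⟨zero_le_one, le_rfl⟩ hx.2

theorem apply_zero_left (hS : Semicopula S) {z : ℝ} (hz : z ∈ Icc (0:ℝ) 1) : S 0 z = 0 :=
  le_antisymm ((hS.apply_le_min ⟨le_rfl, zero_le_one⟩ hz).trans (min_le_left _ _))
    (hS.1 0 ⟨le_rfl, zero_le_one⟩ z hz).1

end Semicopula

theorem setOf_le_indicator {M : Type*} [Preorder M] [Zero M] {A : Set X} {g : X → M} {t : M}
    (ht : 0 < t) :
    {x | t ≤ A.indicator g x} = A ∩ {x | t ≤ g x} := by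
  ext x
  by_cases hx : x ∈ A <;> simp [hx, ht.not_ge]

theorem genInt_le {f : X → ℝ} {c : ℝ}
    (h : ∀ t : Icc (0:ℝ) 1, S t (μ {x | (t:ℝ) ≤ f x}) ≤ c) : genInt S μ f ≤ c :=
  haveI := nonempty_Icc_subtype (zero_le_one (α := ℝ))
  ciSup_le h

theorem le_genInt (hS : Semicopula S) (hμ : Capacity μ) (f : X → ℝ) {t : ℝ}
    (ht : t ∈ Icc (0:ℝ) 1) : S t (μ {x | t ≤ f x}) ≤ genInt S μ f := by
  refine le_ciSup (f := fun t : Icc (0:ℝ) 1 => S t (μ {x | (t:ℝ) ≤ f x})) ⟨1, ?_⟩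
    ⟨t, ht⟩
  rintro _ ⟨u, rfl⟩
  exact (hS.1 u u.2 _ (hμ.1 _)).2

theorem genInt_nonneg (hS : Semicopula S) (hμ : Capacity μ) (f : X → ℝ) :
    0 ≤ genInt S μ f := by
  simpa [hS.apply_zero_left (hμ.1 _)] using le_genInt hS hμ f ⟨le_rfl, zero_le_one⟩

theorem genInt_indicator_le (hS : Semicopula S) (hμ : Capacity μ) {A : Set X} {g : X → ℝ}
    {c : ℝ} (hc : 0 ≤ c) (h : ∀ t ∈ Ioc (0:ℝ) 1, S t (μ (A ∩ {x | t ≤ g x})) ≤ c) :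
    genInt S μ (A.indicator g) ≤ c := by
  refine genInt_le fun ⟨t, ht0, ht1⟩ => ?_
  rcases ht0.eq_or_lt with rfl | htpos
  · rwa [hS.apply_zero_left (hμ.1 _)]
  · rw [setOf_le_indicator htpos]
    exact h t ⟨htpos, ht1⟩

theorem genInt_indicator_const (hS : Semicopula S) (hμ : Capacity μ) (A : Set X) {c : ℝ}
    (hc : c ∈ Icc (0:ℝ) 1) : genInt S μ (A.indicator fun _ => c) = S c (μ A) := by
  apply le_antisymm
  · refine genInt_indicator_le hS hμ (hS.1 c hc _ (hμ.1 A)).1 fun t ht => ?_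
    have ht' : t ∈ Icc (0:ℝ) 1 := Ioc_subset_Icc_self ht
    by_cases htc : t ≤ c
    · simpa [htc] using hS.2.2.1 _ (hμ.1 A) t ht' c hc htc
    · simpa [htc, hμ.2.2.1] using
        ((hS.apply_le_min ht' ⟨le_rfl, zero_le_one⟩).trans (min_le_right _ _)).trans
          (hS.1 c hc _ (hμ.1 A)).1
  · rcases hc.1.eq_or_lt with rfl | hcpos
    · rw [hS.apply_zero_left (hμ.1 A)]
      exact genInt_nonneg hS hμ _
    · simpa [setOf_le_indicator hcpos] using le_genInt hS hμ (A.indicator fun _ => c) hc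

theorem genInt_indicator_add_le (hS : Semicopula S) (hμ : Capacity μ)
    (H : ∀ x ∈ Icc (0:ℝ) 1, ∀ y ∈ Icc (0:ℝ) 1, ∀ z ∈ Icc (0:ℝ) 1, x + y ≤ 1 →
      S (x + y) z ≤ S x z + min y z)
    (A : Set X) (f : X → ℝ) {a : ℝ} (ha : a ∈ Icc (0:ℝ) 1) :
    genInt S μ (A.indicator fun x => f x + a) ≤ genInt S μ (A.indicator f) + min a (μ A) := by
  have hI := genInt_nonneg hS hμ (A.indicator f)
  refine genInt_indicator_le hS hμ (add_nonneg hI (le_min ha.1 (hμ.1 A).1))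
    fun t ⟨ht0, ht1⟩ => ?_
  set B := A ∩ {x | t ≤ f x + a}
  have hBA : μ B ≤ μ A := hμ.2.1 _ _ inter_subset_left
  rcases le_or_gt t a with hta | hat
  · calc S t (μ B) ≤ min t (μ B) := hS.apply_le_min ⟨ht0.le, ht1⟩ (hμ.1 B)
      _ ≤ min a (μ A) := min_le_min hta hBA
      _ ≤ _ := le_add_of_nonneg_left hI
  · have hB : B = {x | t - a ≤ A.indicator f x} := by
      rw [setOf_le_indicator (sub_pos.2 hat)]
      simp only [sub_le_iff_le_add, B]
    have hta : t - a ∈ Icc (0:ℝ) 1 := ⟨by linarith, by linarith [ha.1]⟩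
    calc S t (μ B) = S (t - a + a) (μ B) := by rw [sub_add_cancel]
      _ ≤ S (t - a) (μ B) + min a (μ B) := H _ hta a ha _ (hμ.1 B) (by linarith)
      _ ≤ genInt S μ (A.indicator f) + min a (μ A) := by
        gcongr
        rw [hB]
        exact le_genInt hS hμ _ hta

open Classical in
noncomputable def constCapacity (z : ℝ) : Set X → ℝ :=
  fun B => if B = univ then 1 else if B = ∅ then 0 else z

theorem constCapacity_of_ne {z : ℝ} {B : Set X} (hB : B ≠ univ) (hB' : B ≠ ∅) :
    constCapacity z B = z := by
  simp [constCapacity, hB, hB']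

theorem capacity_constCapacity [Nonempty X] {z : ℝ} (hz : z ∈ Icc (0:ℝ) 1) :
    Capacity (constCapacity z : Set X → ℝ) := by
  have hmem : ∀ B : Set X, constCapacity z B ∈ Icc (0:ℝ) 1 := fun B => by
    unfold constCapacity
    split_ifs
    exacts [⟨zero_le_one, le_rfl⟩, ⟨le_rfl, zero_le_one⟩, hz]
  refine ⟨hmem, fun B C hBC => ?_, by simp [constCapacity, empty_ne_univ],
    by simp [constCapacity]⟩
  by_cases hC : C = univ
  · simpa [constCapacity, hC] using (hmem B).2
  by_cases hB : B = ∅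
  · simpa [constCapacity, hB, empty_ne_univ] using (hmem C).1
  rw [constCapacity_of_ne (fun h => hC (univ_subset_iff.mp (h ▸ hBC))) hB,
    constCapacity_of_ne hC (fun h => hB (subset_empty_iff.mp (h ▸ hBC)))]

theorem stmt4 (S : ℝ → ℝ → ℝ) (hS : Semicopula S) :
    (∀ (X : Type) (μ : Set X → ℝ), Capacity μ → ∀ (A : Set X) (f : X → ℝ),
        (∀ x, f x ∈ Icc (0:ℝ) 1) → ∀ a ∈ Icc (0:ℝ) 1,
        (∀ x, f x + a ∈ Icc (0:ℝ) 1) →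
        genInt S μ (A.indicator (fun x => f x + a)) ≤
          genInt S μ (A.indicator f) + min a (μ A)) ↔
    (∀ x ∈ Icc (0:ℝ) 1, ∀ y ∈ Icc (0:ℝ) 1, ∀ z ∈ Icc (0:ℝ) 1, x + y ≤ 1 →
        S (x + y) z ≤ S x z + min y z) := by
  constructor
  · intro H x hx y hy z hz hxy
    have hμ := capacity_constCapacity (X := Bool) hz
    have hxy' : x + y ∈ Icc (0:ℝ) 1 := ⟨add_nonneg hx.1 hy.1, hxy⟩
    have hA : constCapacity z ({true} : Set Bool) = z :=
      constCapacity_of_ne (fun h => by simpa using h.ge (mem_univ false)) (singleton_ne_empty _)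
    have key := H Bool _ hμ {true} (fun _ => x) (fun _ => hx) y hy fun _ => hxy'
    rwa [genInt_indicator_const hS hμ _ hxy', genInt_indicator_const hS hμ _ hx, hA] at key
  · intro H X μ hμ A f _ a ha _
    exact genInt_indicator_add_le hS hμ H A f ha
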